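/- arXiv:2102.00101 — 2 statements merged into one kernel-verified Lean document; each statement's English description precedes it below -/
import Mathlib

section
/- For a positive continuous weight function M on [-1,1], define the weighted average ⟨φ⟩ = (1/2)∫_{-1}^{1} φ(ξ)M(ξ)dξ, and set a = ⟨ξ-ξ²⟩/⟨1-ξ⟩, b = ⟨ξ+ξ²⟩/⟨1+ξ⟩. Then -1 < a < b < 1. -/
/-!
Write `Iₖ = ∫ ξᵏ M`. Clearing the (positive) denominators, `-1 < a` and `b < 1` both reduce to
`∫ (1 - ξ²) M > 0`, while `a < b` reduces to the strict Cauchy–Schwarz inequality `I₁² < I₀ I₂`,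
i.e. to `∫ (ξ - I₁/I₀)² M > 0`. All three are weighted integrals of quadratics that are
nonnegative on `[-1, 1]` and positive somewhere inside it.
-/

open intervalIntegral

open Set MeasureTheory
open scoped Interval

lemma integral_pos_of_continuousOn_of_pos_at {f : ℝ → ℝ} {a b x₀ : ℝ}
    (hf : ContinuousOn f (Icc a b)) (hnonneg : ∀ x ∈ Icc a b, 0 ≤ f x)
    (hx₀ : x₀ ∈ Ioo a b) (hpos : 0 < f x₀) : 0 < ∫ x in a..b, f x := by
  have hab : a ≤ b := (hx₀.1.trans hx₀.2).le
  have hint : IntervalIntegrable f volume a b :=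
    (hf.mono (by rw [uIcc_of_le hab])).intervalIntegrable
  have hae : 0 ≤ᵐ[volume.restrict (Ι a b)] f := by
    rw [uIoc_of_le hab]
    exact ae_restrict_of_forall_mem measurableSet_Ioc fun x hx => hnonneg x (Ioc_subset_Icc_self hx)
  rw [integral_pos_iff_support_of_nonneg_ae' hae hint]
  refine ⟨hx₀.1.trans hx₀.2, ?_⟩
  have hU : IsOpen (Ioo a b ∩ f ⁻¹' Ioi 0) :=
    (hf.mono Ioo_subset_Icc_self).isOpen_inter_preimage isOpen_Ioo isOpen_Ioi
  refine (hU.measure_pos volume ⟨x₀, hx₀, hpos⟩).trans_le (measure_mono ?_)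
  rintro x ⟨hx, hfx⟩
  exact ⟨(mem_preimage.mp hfx).ne', Ioo_subset_Ioc_self hx⟩

section Moments

variable {a b : ℝ} {M : ℝ → ℝ}

lemma integral_quadratic_mul (hM : ContinuousOn M (uIcc a b)) (p q r : ℝ) :
    ∫ x in a..b, (p + q * x + r * x ^ 2) * M x =
      p * (∫ x in a..b, M x) + q * (∫ x in a..b, x * M x) + r * ∫ x in a..b, x ^ 2 * M x := by
  have h0 : IntervalIntegrable M volume a b := hM.intervalIntegrable
  have h1 : IntervalIntegrable (fun x => x * M x) volume a b :=
    (continuousOn_id.mul hM).intervalIntegrable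
  have h2 : IntervalIntegrable (fun x => x ^ 2 * M x) volume a b :=
    ((continuousOn_id.pow 2).mul hM).intervalIntegrable
  simp only [add_mul, mul_assoc]
  rw [integral_add ((h0.const_mul p).add (h1.const_mul q)) (h2.const_mul r),
    integral_add (h0.const_mul p) (h1.const_mul q), intervalIntegral.integral_const_mul,
    intervalIntegral.integral_const_mul, intervalIntegral.integral_const_mul]

lemma integral_quadratic_mul_pos (hM : ContinuousOn M (Icc a b))
    (hMpos : ∀ x ∈ Icc a b, 0 < M x) {p q r : ℝ}
    (hnonneg : ∀ x ∈ Icc a b, 0 ≤ p + q * x + r * x ^ 2) {x₀ : ℝ} (hx₀ : x₀ ∈ Ioo a b)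
    (hpos : 0 < p + q * x₀ + r * x₀ ^ 2) :
    0 < p * (∫ x in a..b, M x) + q * (∫ x in a..b, x * M x) + r * ∫ x in a..b, x ^ 2 * M x := by
  have hab : a ≤ b := (hx₀.1.trans hx₀.2).le
  rw [← integral_quadratic_mul (by rwa [uIcc_of_le hab])]
  exact integral_pos_of_continuousOn_of_pos_at (by fun_prop)
    (fun x hx => mul_nonneg (hnonneg x hx) (hMpos x hx).le) hx₀
    (mul_pos hpos (hMpos x₀ (Ioo_subset_Icc_self hx₀)))

lemma sq_integral_mul_lt (hab : a < b) (hM : ContinuousOn M (Icc a b))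
    (hMpos : ∀ x ∈ Icc a b, 0 < M x) :
    (∫ x in a..b, x * M x) ^ 2 < (∫ x in a..b, M x) * ∫ x in a..b, x ^ 2 * M x := by
  set I₀ := ∫ x in a..b, M x
  set I₁ := ∫ x in a..b, x * M x
  set I₂ := ∫ x in a..b, x ^ 2 * M x
  obtain ⟨x₀, hx₀⟩ := nonempty_Ioo.mpr hab
  have hI₀ : 0 < I₀ := by
    simpa using integral_quadratic_mul_pos hM hMpos (p := 1) (q := 0) (r := 0)
      (fun _ _ => by norm_num) hx₀ (by norm_num)
  set c := I₁ / I₀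
  obtain ⟨x₁, hx₁, hne⟩ := ((Ioo_infinite hab).sdiff (finite_singleton c)).nonempty
  -- `(x - c)² = c² - 2c x + x²`
  have hvar : 0 < c ^ 2 * I₀ + -2 * c * I₁ + 1 * I₂ :=
    integral_quadratic_mul_pos hM hMpos (fun x _ => by nlinarith [sq_nonneg (x - c)]) hx₁
      (by nlinarith [sq_pos_of_ne_zero (sub_ne_zero.mpr (mt mem_singleton_iff.mpr hne))])
  have hc : c * I₀ = I₁ := div_mul_cancel₀ _ hI₀.ne'
  nlinarith [mul_pos hI₀ hvar]

end Moments

theorem endpoints_in_interval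
    (M : ℝ → ℝ) (hMc : ContinuousOn M (Set.Icc (-1) 1))
    (hMpos : ∀ ξ ∈ Set.Icc (-1:ℝ) 1, 0 < M ξ)
    (avg : (ℝ → ℝ) → ℝ)
    (havg : ∀ φ : ℝ → ℝ, avg φ = (1/2) * ∫ ξ in (-1:ℝ)..1, φ ξ * M ξ)
    (a b : ℝ)
    (ha : a = avg (fun ξ => ξ - ξ^2) / avg (fun ξ => 1 - ξ))
    (hb : b = avg (fun ξ => ξ + ξ^2) / avg (fun ξ => 1 + ξ)) :
    -1 < a ∧ a < b ∧ b < 1 := by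
  set I₀ := ∫ x in (-1:ℝ)..1, M x
  set I₁ := ∫ x in (-1:ℝ)..1, x * M x
  set I₂ := ∫ x in (-1:ℝ)..1, x ^ 2 * M x
  have avg_quadratic (φ : ℝ → ℝ) (p q r : ℝ) (hφ : ∀ ξ, φ ξ = p + q * ξ + r * ξ ^ 2) :
      avg φ = (p * I₀ + q * I₁ + r * I₂) / 2 := by
    rw [havg, funext hφ, integral_quadratic_mul (by rwa [uIcc_of_le (by norm_num)])]
    ring
  have h0 : (0:ℝ) ∈ Ioo (-1) 1 := by norm_num
  have h_one_sub : 0 < 1 * I₀ + -1 * I₁ + 0 * I₂ :=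
    integral_quadratic_mul_pos hMc hMpos (fun x hx => by linarith [hx.2]) h0 (by norm_num)
  have h_one_add : 0 < 1 * I₀ + 1 * I₁ + 0 * I₂ :=
    integral_quadratic_mul_pos hMc hMpos (fun x hx => by linarith [hx.1]) h0 (by norm_num)
  have h_one_sub_sq : 0 < 1 * I₀ + 0 * I₁ + -1 * I₂ :=
    integral_quadratic_mul_pos hMc hMpos (fun x hx => by nlinarith [hx.1, hx.2]) h0 (by norm_num)
  have hCS : I₁ ^ 2 < I₀ * I₂ := sq_integral_mul_lt (by norm_num) hMc hMpos
  rw [ha, hb, avg_quadratic _ 0 1 (-1) (fun _ => by ring),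
    avg_quadratic _ 1 (-1) 0 (fun _ => by ring), avg_quadratic _ 0 1 1 (fun _ => by ring),
    avg_quadratic _ 1 1 0 (fun _ => by ring)]
  refine ⟨?_, ?_, ?_⟩
  · rw [lt_div_iff₀ (by linarith)]; linarith
  · rw [div_lt_div_iff₀ (by linarith) (by linarith)]; nlinarith
  · rw [div_lt_one (by linarith)]; linarith
end

section
/- Accuracy of the scaling limiter: let w : I → ℝ be nonnegative, w_h a polynomial with positive weighted average w̄ = (∫_I M w_h)/(∫_I M) > 0, and w̃_h(x) = θ(w_h(x)-w̄)+w̄ with θ = min{1, w̄/(w̄ - min_S w_h)} for a finite set S ⊂ I with min_S w_h < w̄. Then for all x ∈ I, |w̃_h(x) - w_h(x)| ≤ (1-θ)·(|w_h(x)| + w̄), and in particular since 1-θ ≤ (min_S w_h)₋/(w̄ - min_S w_h) where t₋ = max(-t,0), the limiter deviation is controlled by the negative part of w_h on S. -/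
section ScalingLimiter

variable {K : Type*} [Field K] [LinearOrder K] [IsStrictOrderedRing K]

theorem abs_limiter_sub_le {θ u c : K} (hθ : θ ≤ 1) :
    |θ * (u - c) + c - u| ≤ (1 - θ) * (|u| + |c|) := by
  have hdev : θ * (u - c) + c - u = (1 - θ) * (c - u) := by ring
  rw [hdev, abs_mul, abs_of_nonneg (sub_nonneg.mpr hθ), abs_sub_comm]
  exact mul_le_mul_of_nonneg_left (abs_sub _ _) (sub_nonneg.mpr hθ)

theorem one_sub_min_one_div_eq {c m : K} (hm : m < c) :
    1 - min 1 (c / (c - m)) = max (-m) 0 / (c - m) := by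
  have hden : 0 < c - m := sub_pos.mpr hm
  have hsub : 1 - c / (c - m) = -m / (c - m) := by field_simp; ring
  rw [← max_sub_sub_left, sub_self, hsub, ← max_div_div_right hden.le, zero_div, max_comm]

end ScalingLimiter

theorem limiter_accuracy_general
    (a b : ℝ)
    (wh : Polynomial ℝ)
    (wbar : ℝ)
    (hwbar_pos : 0 < wbar)
    (m : ℝ) (hmlt : m < wbar)
    (θ : ℝ) (hθ : θ = min 1 (wbar / (wbar - m))) :
    (∀ x ∈ Set.Icc a b,
        |(θ * (wh.eval x - wbar) + wbar) - wh.eval x| ≤ (1 - θ) * (|wh.eval x| + wbar))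
    ∧ 1 - θ ≤ max (-m) 0 / (wbar - m) := by
  subst hθ
  refine ⟨fun x _ => ?_, (one_sub_min_one_div_eq hmlt).le⟩
  simpa only [abs_of_pos hwbar_pos] using
    abs_limiter_sub_le (u := wh.eval x) (c := wbar) (min_le_left 1 _)

theorem limiter_accuracy
    (a b : ℝ) (hab : a < b)
    (M : ℝ → ℝ) (hMc : ContinuousOn M (Set.Icc a b))
    (hMpos : ∀ x ∈ Set.Icc a b, 0 < M x)
    (w : ℝ → ℝ) (hw : ∀ x ∈ Set.Icc a b, 0 ≤ w x)
    (wh : Polynomial ℝ)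
    (wbar : ℝ)
    (hwbar : wbar = (∫ x in a..b, M x * wh.eval x) / (∫ x in a..b, M x))
    (hwbar_pos : 0 < wbar)
    (S : Finset ℝ) (hS : S.Nonempty) (hSsub : ∀ x ∈ S, x ∈ Set.Icc a b)
    (m : ℝ) (hm : m = S.inf' hS (fun x => wh.eval x)) (hmlt : m < wbar)
    (θ : ℝ) (hθ : θ = min 1 (wbar / (wbar - m))) :
    (∀ x ∈ Set.Icc a b,
        |(θ * (wh.eval x - wbar) + wbar) - wh.eval x| ≤ (1 - θ) * (|wh.eval x| + wbar))
    ∧ 1 - θ ≤ max (-m) 0 / (wbar - m) :=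
  limiter_accuracy_general a b wh wbar hwbar_pos m hmlt θ hθ
end
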